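/- arXiv:2304.00801 — 2 statements merged into one kernel-verified Lean document; each statement's English description precedes it below -/
import Mathlib

section
/- Let m ∈ M with ‖m‖₁ > 0. For every maximizer s of the Dice score D_m over binary segmentations S, the volume of s is at least the volume of the 1/2-thresholded marginal: ‖s‖₁ ≥ ‖I_{[1/2,1]}∘m‖₁ = λ({ω : m(ω) ≥ 1/2}). -/
open MeasureTheory Filter

noncomputable section

/-- The unit cube `[0,1]^n`. -/
def cube (n : ℕ) : Set (Fin n → ℝ) := Set.univ.pi fun _ => Set.Icc (0:ℝ) 1

/-- The (normalized) Lebesgue measure on the unit cube. -/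
def lam (n : ℕ) : Measure (Fin n → ℝ) := volume.restrict (cube n)

/-- The `L¹`-volume `‖f‖₁ = ∫ f dλ` (for nonnegative `f`). -/
def vol1 (n : ℕ) (f : (Fin n → ℝ) → ℝ) : ℝ := ∫ ω, f ω ∂(lam n)

/-- The Dice score `D_m(s) = 2∫ s·m dλ / (‖s‖₁ + ‖m‖₁)`. -/
def Dice (n : ℕ) (m s : (Fin n → ℝ) → ℝ) : ℝ :=
  2 * (∫ ω, s ω * m ω ∂(lam n)) / (vol1 n s + vol1 n m)

/-- The soft-Dice loss `SD_m(c) = 1 - 2∫ c·m dλ / (‖c‖₁ + ‖m‖₁)`. -/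
def softDice (n : ℕ) (m c : (Fin n → ℝ) → ℝ) : ℝ :=
  1 - 2 * (∫ ω, c ω * m ω ∂(lam n)) / (vol1 n c + vol1 n m)

/-- Membership in `M`: measurable with values in `[0,1]`. -/
def MemM (n : ℕ) (m : (Fin n → ℝ) → ℝ) : Prop :=
  Measurable m ∧ ∀ ω, m ω ∈ Set.Icc (0:ℝ) 1

/-- Membership in `S`: measurable with values in `{0,1}`. -/
def MemS (n : ℕ) (s : (Fin n → ℝ) → ℝ) : Prop :=
  Measurable s ∧ ∀ ω, s ω = 0 ∨ s ω = 1

/-- The set of soft-Dice values over `M`. -/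
def SDvals (n : ℕ) (m : (Fin n → ℝ) → ℝ) : Set ℝ :=
  {x : ℝ | ∃ c, MemM n c ∧ x = softDice n m c}

/-- The set of Dice values over `S`. -/
def Dvals (n : ℕ) (m : (Fin n → ℝ) → ℝ) : Set ℝ :=
  {x : ℝ | ∃ s, MemS n s ∧ x = Dice n m s}

/-!
Write the binary segmentation `s` as the indicator of a set `E`, and let `A` be disjoint from `E`
with `m ≥ 1/2` on `A`. Put `I = ∫_E m`, `V = λ(E)`, `J = ∫_A m`, `a = λ(A)` and `M = ‖m‖₁`.
Enlarging `E` to `E ∪ A` moves the Dice score from `2I/(V + M)` to `2(I + J)/(V + a + M)`, so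
maximality of `E` gives `J (V + M) ≤ I a`. But `2I ≤ V + M - J` (as `I ≤ V` and `I + J ≤ M`) and
`J ≥ a/2`, which together force `a J ≤ 0`, hence `a = 0`. With `A = {m ≥ 1/2} \ E` this says
that `{m ≥ 1/2}` lies in `E` up to a null set.
-/

lemma lam_univ (n : ℕ) : lam n Set.univ = 1 := by
  rw [lam, Measure.restrict_apply_univ, cube, volume_pi_pi]
  simp [Real.volume_Icc]

instance (n : ℕ) : IsProbabilityMeasure (lam n) := ⟨lam_univ n⟩

lemma setIntegral_le_measureReal_of_le_one {α : Type*} [MeasurableSpace α] {μ : Measure α}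
    {f : α → ℝ} {s : Set α} (hs : MeasurableSet s) (hμs : μ s ≠ ⊤) (hf : IntegrableOn f s μ)
    (h1 : ∀ x ∈ s, f x ≤ 1) : ∫ x in s, f x ∂μ ≤ μ.real s := by
  simpa using setIntegral_mono_on hf (integrableOn_const hμs) hs h1

lemma nonpos_of_div_add_le_div {I J V M a : ℝ} (hI : 0 ≤ I) (hIV : I ≤ V) (hIJ : I + J ≤ M)
    (hJ : a / 2 ≤ J) (h : 2 * (I + J) / (V + a + M) ≤ 2 * I / (V + M)) : a ≤ 0 := by
  by_contra! ha
  rw [div_le_div_iff₀ (by linarith) (by linarith)] at h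
  nlinarith

section

variable {n : ℕ} {m s : (Fin n → ℝ) → ℝ} {E : Set (Fin n → ℝ)}

lemma MemM.integrable (hm : MemM n m) : Integrable m (lam n) :=
  .of_bound hm.1.aestronglyMeasurable 1 <| ae_of_all _ fun ω => by
    rw [Real.norm_eq_abs, abs_le]
    constructor <;> linarith [(hm.2 ω).1, (hm.2 ω).2]

lemma MemM.setIntegral_nonneg (hm : MemM n m) (E : Set (Fin n → ℝ)) :
    0 ≤ ∫ ω in E, m ω ∂lam n :=
  setIntegral_nonneg_of_ae (ae_of_all _ fun ω => (hm.2 ω).1)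

lemma MemM.setIntegral_le_measureReal (hm : MemM n m) (hE : MeasurableSet E) :
    ∫ ω in E, m ω ∂lam n ≤ (lam n).real E :=
  setIntegral_le_measureReal_of_le_one hE (measure_ne_top _ _) hm.integrable.integrableOn
    fun ω _ => (hm.2 ω).2

lemma MemM.setIntegral_le_vol1 (hm : MemM n m) (E : Set (Fin n → ℝ)) :
    ∫ ω in E, m ω ∂lam n ≤ vol1 n m :=
  setIntegral_le_integral hm.integrable (ae_of_all _ fun ω => (hm.2 ω).1)

lemma MemS.exists_eq_indicator (hs : MemS n s) : ∃ E, MeasurableSet E ∧ s = E.indicator 1 := by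
  refine ⟨{ω | s ω = 1}, hs.1 (measurableSet_singleton 1), funext fun ω => ?_⟩
  rcases hs.2 ω with h | h <;> simp [h]

lemma memS_indicator_one (hE : MeasurableSet E) : MemS n (E.indicator 1) :=
  ⟨measurable_const.indicator hE, fun ω => by by_cases h : ω ∈ E <;> simp [h]⟩

lemma dice_indicator_one (m : (Fin n → ℝ) → ℝ) (hE : MeasurableSet E) :
    Dice n m (E.indicator 1) = 2 * (∫ ω in E, m ω ∂lam n) / ((lam n).real E + vol1 n m) := by
  have hmul : (fun ω => E.indicator 1 ω * m ω) = E.indicator m := by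
    funext ω
    by_cases h : ω ∈ E <;> simp [h]
  rw [Dice, hmul, integral_indicator hE, vol1, integral_indicator_one hE]

lemma dice_le_one (hm : MemM n m) (hs : MemS n s) : Dice n m s ≤ 1 := by
  obtain ⟨E, hE, rfl⟩ := hs.exists_eq_indicator
  rw [dice_indicator_one m hE]
  refine div_le_one_of_le₀ ?_ (add_nonneg measureReal_nonneg ?_)
  · linarith [hm.setIntegral_le_measureReal hE, hm.setIntegral_le_vol1 E]
  · linarith [hm.setIntegral_nonneg E, hm.setIntegral_le_vol1 E]

lemma measureReal_eq_zero_of_dice_maximizer (hm : MemM n m) (hE : MeasurableSet E)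
    (hmax : Dice n m (E.indicator 1) = sSup (Dvals n m)) {A : Set (Fin n → ℝ)}
    (hA : MeasurableSet A) (hEA : Disjoint E A) (hhalf : ∀ ω ∈ A, 1 / 2 ≤ m ω) :
    (lam n).real A = 0 := by
  have hbdd : BddAbove (Dvals n m) := ⟨1, by rintro _ ⟨t, ht, rfl⟩; exact dice_le_one hm ht⟩
  have hmE := hm.integrable.integrableOn (s := E)
  have hmA := hm.integrable.integrableOn (s := A)
  have hle : Dice n m ((E ∪ A).indicator 1) ≤ Dice n m (E.indicator 1) :=
    hmax ▸ le_csSup hbdd ⟨_, memS_indicator_one (hE.union hA), rfl⟩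
  rw [dice_indicator_one m (hE.union hA), dice_indicator_one m hE,
    setIntegral_union hEA hA hmE hmA, measureReal_union hEA hA] at hle
  have hEA_le : ∫ ω in E, m ω ∂lam n + ∫ ω in A, m ω ∂lam n ≤ vol1 n m := by
    rw [← setIntegral_union hEA hA hmE hmA]
    exact hm.setIntegral_le_vol1 _
  have hJ : (lam n).real A / 2 ≤ ∫ ω in A, m ω ∂lam n := by
    linarith [setIntegral_ge_of_const_le_real hA (measure_ne_top _ _) hhalf hmA]
  exact le_antisymm (nonpos_of_div_add_le_div (hm.setIntegral_nonneg E)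
    (hm.setIntegral_le_measureReal hE) hEA_le hJ hle) measureReal_nonneg

end

theorem dice_maximizer_volume_ge_half_threshold_general
    (n : ℕ) (m : (Fin n → ℝ) → ℝ) (hm : MemM n m)
    (s : (Fin n → ℝ) → ℝ) (hs : MemS n s)
    (hmax : Dice n m s = sSup (Dvals n m)) :
    (lam n {ω | (1:ℝ)/2 ≤ m ω}).toReal ≤ vol1 n s := by
  obtain ⟨E, hE, rfl⟩ := hs.exists_eq_indicator
  set H := {ω | (1:ℝ)/2 ≤ m ω}
  have hnull : (lam n).real (H \ E) = 0 :=
    measureReal_eq_zero_of_dice_maximizer hm hE hmax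
      ((measurableSet_le measurable_const hm.1).diff hE) Set.disjoint_sdiff_right
      fun ω hω => hω.1
  calc (lam n).real H ≤ (lam n).real (E ∪ H \ E) :=
        measureReal_mono (Set.sdiff_subset_iff.1 subset_rfl)
    _ ≤ (lam n).real E + (lam n).real (H \ E) := measureReal_union_le _ _
    _ = vol1 n (E.indicator 1) := by rw [hnull, add_zero, vol1, integral_indicator_one hE]

theorem dice_maximizer_volume_ge_half_threshold
    (n : ℕ) (m : (Fin n → ℝ) → ℝ) (hm : MemM n m) (hpos : 0 < vol1 n m)
    (s : (Fin n → ℝ) → ℝ) (hs : MemS n s)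
    (hmax : Dice n m s = sSup (Dvals n m)) :
    (lam n {ω | (1:ℝ)/2 ≤ m ω}).toReal ≤ vol1 n s :=
  dice_maximizer_volume_ge_half_threshold_general n m hm s hs hmax
end
end

section
/- The soft-Dice loss is quasi-affine along line segments in a useful sense: for m ∈ M and c₀, c₁ ∈ M, the function t ↦ SD_m((1−t)c₀ + t c₁) on [0,1] is a Möbius (linear-fractional) function of t, and hence attains its minimum over [0,1] at an endpoint t ∈ {0,1}. Consequently the set of minimizers of SD_m over M contains extreme points of M, i.e., there always exists a binary-valued minimizer of soft-Dice. -/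
open MeasureTheory Filter

noncomputable section

/-!
Along the segment `c_t = (1 - t) c₀ + t c₁` both `∫ c_t m` and `‖c_t‖₁` are affine in `t`, so
`SD_m(c_t)` is linear-fractional in `t`; with positive denominators a quotient of convex
combinations is at most the larger endpoint quotient, so the minimum sits at an endpoint.

For the binary minimizer pick, by the intermediate value theorem, `r` with
`∫ (2m - r)⁺ = r ‖m‖₁`. For every `c ∈ M`,
`2 ∫ c m - r ‖c‖₁ = ∫ c (2m - r) ≤ ∫ (2m - r)⁺ = r ‖m‖₁`, i.e. `SD_m(c) ≥ 1 - r`, with equality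
for the indicator of `{2m > r}`. If `‖m‖₁ = 0` then `m = 0` a.e. and `SD_m ≡ 1`.
-/

open Set

lemma mul_le_max_zero {a b : ℝ} (ha : a ∈ Icc (0 : ℝ) 1) : a * b ≤ max b 0 := by
  rcases le_total 0 b with hb | hb
  · exact (mul_le_of_le_one_left hb ha.2).trans (le_max_left _ _)
  · exact (mul_nonpos_of_nonneg_of_nonpos ha.1 hb).trans (le_max_right _ _)

lemma ite_pos_mul_eq_max_zero (b : ℝ) : (if 0 < b then (1 : ℝ) else 0) * b = max b 0 := by
  split_ifs with hb
  · rw [one_mul, max_eq_left hb.le]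
  · rw [zero_mul, max_eq_right (not_lt.1 hb)]

lemma convex_combination_div_le_max_div {a₀ a₁ d₀ d₁ t : ℝ} (hd₀ : 0 < d₀) (hd₁ : 0 < d₁)
    (ht : t ∈ Icc (0 : ℝ) 1) :
    ((1 - t) * a₀ + t * a₁) / ((1 - t) * d₀ + t * d₁) ≤ max (a₀ / d₀) (a₁ / d₁) := by
  obtain ⟨ht₀, ht₁⟩ := ht
  have h₀ : a₀ ≤ max (a₀ / d₀) (a₁ / d₁) * d₀ := (div_le_iff₀ hd₀).1 (le_max_left _ _)
  have h₁ : a₁ ≤ max (a₀ / d₀) (a₁ / d₁) * d₁ := (div_le_iff₀ hd₁).1 (le_max_right _ _)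
  have hd : 0 < (1 - t) * d₀ + t * d₁ := by
    linarith [lt_min hd₀ hd₁, mul_le_mul_of_nonneg_left (min_le_left d₀ d₁) (sub_nonneg.2 ht₁),
      mul_le_mul_of_nonneg_left (min_le_right d₀ d₁) ht₀]
  rw [div_le_iff₀ hd]
  linarith [mul_le_mul_of_nonneg_left h₀ (sub_nonneg.2 ht₁), mul_le_mul_of_nonneg_left h₁ ht₀]

instance lam.instIsProbabilityMeasure (n : ℕ) : IsProbabilityMeasure (lam n) := by
  constructor
  rw [lam, Measure.restrict_apply_univ, cube, volume_pi_pi]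
  simp [Real.volume_Icc]

section UnitInterval

variable {α : Type*} [MeasurableSpace α] {μ : Measure α} {f m : α → ℝ}

lemma MeasureTheory.Integrable.mul_of_mem_Icc {g : α → ℝ} (hg : Integrable g μ)
    (hf : Measurable f) (hf01 : ∀ x, f x ∈ Icc (0 : ℝ) 1) : Integrable (fun x => f x * g x) μ :=
  hg.bdd_mul hf.aestronglyMeasurable <| ae_of_all _ fun x => by
    rw [Real.norm_eq_abs, abs_of_nonneg (hf01 x).1]
    exact (hf01 x).2

lemma measurable_ite_pos_one_zero {g : α → ℝ} (hg : Measurable g) :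
    Measurable fun x => if 0 < g x then (1 : ℝ) else 0 :=
  Measurable.ite (measurableSet_lt measurable_const hg) measurable_const measurable_const

variable [IsFiniteMeasure μ]

lemma integrable_of_mem_Icc (hf : Measurable f) (hf01 : ∀ x, f x ∈ Icc (0 : ℝ) 1) :
    Integrable f μ :=
  Integrable.of_bound hf.aestronglyMeasurable 1 <| ae_of_all _ fun x => by
    rw [Real.norm_eq_abs, abs_of_nonneg (hf01 x).1]
    exact (hf01 x).2

lemma continuous_integral_max_sub_zero {g : α → ℝ} (hg : Integrable g μ) :
    Continuous fun r : ℝ => ∫ x, max (g x - r) 0 ∂μ := by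
  have hint : ∀ r : ℝ, Integrable (fun x => max (g x - r) 0) μ :=
    fun r => (hg.sub (integrable_const r)).pos_part
  refine (LipschitzWith.of_dist_le' (K := μ.real univ) fun a b => ?_).continuous
  rw [Real.dist_eq, Real.dist_eq, ← integral_sub (hint a) (hint b),
    mul_comm, ← Real.norm_eq_abs]
  refine norm_integral_le_of_norm_le_const (ae_of_all _ fun x => ?_)
  simpa [Real.norm_eq_abs, abs_sub_comm] using abs_max_sub_max_le_abs (g x - a) (g x - b) 0

lemma exists_integral_max_two_mul_sub_zero_eq (hm : Measurable m)
    (hm01 : ∀ x, m x ∈ Icc (0 : ℝ) 1) :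
    ∃ r, ∫ x, max (2 * m x - r) 0 ∂μ = r * ∫ x, m x ∂μ := by
  have hcont : Continuous fun r : ℝ => ∫ x, max (2 * m x - r) 0 ∂μ - r * ∫ x, m x ∂μ :=
    (continuous_integral_max_sub_zero ((integrable_of_mem_Icc (μ := μ) hm hm01).const_mul 2)).sub
      (continuous_id.mul continuous_const)
  have h0 : ∫ x, max (2 * m x - 0) 0 ∂μ = 2 * ∫ x, m x ∂μ := by
    rw [← integral_const_mul]
    congr 1 with x
    rw [sub_zero, max_eq_left (by linarith [(hm01 x).1])]
  have h2 : ∫ x, max (2 * m x - 2) 0 ∂μ = 0 :=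
    integral_eq_zero_of_ae <| ae_of_all _ fun x => max_eq_right (by linarith [(hm01 x).2])
  have hM : 0 ≤ ∫ x, m x ∂μ := integral_nonneg fun x => (hm01 x).1
  obtain ⟨r, -, hr⟩ := intermediate_value_Icc' (zero_le_two : (0 : ℝ) ≤ 2) hcont.continuousOn
    (show (0 : ℝ) ∈ Icc _ _ by simp only [h0, h2]; constructor <;> linarith)
  exact ⟨r, sub_eq_zero.1 hr⟩

lemma integral_mul_two_mul_sub (hf : Measurable f) (hf01 : ∀ x, f x ∈ Icc (0 : ℝ) 1)
    (hm : Measurable m) (hm01 : ∀ x, m x ∈ Icc (0 : ℝ) 1) (r : ℝ) :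
    ∫ x, f x * (2 * m x - r) ∂μ = 2 * ∫ x, f x * m x ∂μ - r * ∫ x, f x ∂μ := by
  rw [← integral_const_mul, ← integral_const_mul,
    ← integral_sub (((integrable_of_mem_Icc (μ := μ) hm hm01).mul_of_mem_Icc hf hf01).const_mul 2)
      ((integrable_of_mem_Icc hf hf01).const_mul r)]
  congr 1 with x
  ring

lemma two_mul_integral_mul_sub_le (hf : Measurable f) (hf01 : ∀ x, f x ∈ Icc (0 : ℝ) 1)
    (hm : Measurable m) (hm01 : ∀ x, m x ∈ Icc (0 : ℝ) 1) (r : ℝ) :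
    2 * ∫ x, f x * m x ∂μ - r * ∫ x, f x ∂μ ≤ ∫ x, max (2 * m x - r) 0 ∂μ := by
  rw [← integral_mul_two_mul_sub hf hf01 hm hm01]
  have hg : Integrable (fun x => 2 * m x - r) μ :=
    ((integrable_of_mem_Icc (μ := μ) hm hm01).const_mul 2).sub (integrable_const r)
  exact integral_mono (hg.mul_of_mem_Icc hf hf01) hg.pos_part fun x => mul_le_max_zero (hf01 x)

lemma two_mul_integral_ite_mul_sub_eq (hm : Measurable m) (hm01 : ∀ x, m x ∈ Icc (0 : ℝ) 1)
    (r : ℝ) :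
    2 * ∫ x, (if 0 < 2 * m x - r then 1 else 0) * m x ∂μ -
        r * ∫ x, (if 0 < 2 * m x - r then (1 : ℝ) else 0) ∂μ =
      ∫ x, max (2 * m x - r) 0 ∂μ := by
  rw [← integral_mul_two_mul_sub (measurable_ite_pos_one_zero ((hm.const_mul 2).sub_const r))
    (fun x => by split_ifs <;> simp) hm hm01]
  simp only [ite_pos_mul_eq_max_zero]

end UnitInterval

namespace MemM

variable {n : ℕ} {f g : (Fin n → ℝ) → ℝ}

lemma integrable_s19 (hf : MemM n f) : Integrable f (lam n) :=
  integrable_of_mem_Icc hf.1 hf.2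

lemma integrable_mul (hf : MemM n f) (hg : MemM n g) :
    Integrable (fun ω => f ω * g ω) (lam n) :=
  hg.integrable_s19.mul_of_mem_Icc hf.1 hf.2

lemma vol1_nonneg (hf : MemM n f) : 0 ≤ vol1 n f :=
  integral_nonneg fun ω => (hf.2 ω).1

end MemM

lemma MemS.memM {n : ℕ} {s : (Fin n → ℝ) → ℝ} (hs : MemS n s) : MemM n s :=
  ⟨hs.1, fun ω => by rcases hs.2 ω with h | h <;> simp [h]⟩

section SoftDice

variable {n : ℕ} {m c c₀ c₁ : (Fin n → ℝ) → ℝ}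

lemma softDice_eq_one_of_vol1_eq_zero (hm : MemM n m) (hM : vol1 n m = 0) :
    softDice n m c = 1 := by
  have hm0 : m =ᵐ[lam n] 0 :=
    (integral_eq_zero_iff_of_nonneg (fun ω => (hm.2 ω).1) hm.integrable_s19).1 hM
  have hcm : ∫ ω, c ω * m ω ∂(lam n) = 0 :=
    integral_eq_zero_of_ae (hm0.mono fun ω h => by simp [h])
  rw [softDice, hcm, mul_zero, zero_div, sub_zero]

lemma one_sub_le_softDice_iff {r : ℝ} (hD : 0 < vol1 n c + vol1 n m) :
    1 - r ≤ softDice n m c ↔ 2 * ∫ ω, c ω * m ω ∂(lam n) ≤ r * (vol1 n c + vol1 n m) := by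
  rw [softDice, sub_le_sub_iff_left, div_le_iff₀ hD]

lemma softDice_eq_one_sub_iff {r : ℝ} (hD : 0 < vol1 n c + vol1 n m) :
    softDice n m c = 1 - r ↔ 2 * ∫ ω, c ω * m ω ∂(lam n) = r * (vol1 n c + vol1 n m) := by
  rw [softDice, sub_right_inj, div_eq_iff hD.ne']

lemma integral_segment_mul (hm : MemM n m) (h0 : MemM n c₀) (h1 : MemM n c₁) (t : ℝ) :
    ∫ ω, ((1 - t) * c₀ ω + t * c₁ ω) * m ω ∂(lam n) =
      (1 - t) * ∫ ω, c₀ ω * m ω ∂(lam n) + t * ∫ ω, c₁ ω * m ω ∂(lam n) := by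
  simp_rw [add_mul, mul_assoc]
  rw [integral_add ((h0.integrable_mul hm).const_mul _) ((h1.integrable_mul hm).const_mul _),
    integral_const_mul, integral_const_mul]

lemma vol1_segment (h0 : MemM n c₀) (h1 : MemM n c₁) (t : ℝ) :
    vol1 n (fun ω => (1 - t) * c₀ ω + t * c₁ ω) = (1 - t) * vol1 n c₀ + t * vol1 n c₁ := by
  rw [vol1, integral_add (h0.integrable_s19.const_mul _) (h1.integrable_s19.const_mul _),
    integral_const_mul, integral_const_mul, vol1, vol1]

lemma softDice_segment (hm : MemM n m) (h0 : MemM n c₀) (h1 : MemM n c₁) (t : ℝ) :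
    softDice n m (fun ω => (1 - t) * c₀ ω + t * c₁ ω) =
      1 - ((1 - t) * (2 * ∫ ω, c₀ ω * m ω ∂(lam n)) + t * (2 * ∫ ω, c₁ ω * m ω ∂(lam n))) /
        ((1 - t) * (vol1 n c₀ + vol1 n m) + t * (vol1 n c₁ + vol1 n m)) := by
  rw [softDice, integral_segment_mul hm h0 h1, vol1_segment h0 h1]
  congr 2 <;> ring

lemma exists_softDice_segment_eq_mobius (hm : MemM n m) (h0 : MemM n c₀) (h1 : MemM n c₁) :
    ∃ α β γ δ : ℝ, ∀ t : ℝ,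
      softDice n m (fun ω => (1 - t) * c₀ ω + t * c₁ ω) = 1 - (α + β * t) / (γ + δ * t) := by
  refine ⟨2 * ∫ ω, c₀ ω * m ω ∂(lam n),
    2 * ∫ ω, c₁ ω * m ω ∂(lam n) - 2 * ∫ ω, c₀ ω * m ω ∂(lam n),
    vol1 n c₀ + vol1 n m, vol1 n c₁ - vol1 n c₀, fun t => ?_⟩
  rw [softDice_segment hm h0 h1]
  congr 2 <;> ring

lemma min_softDice_le_softDice_segment (hm : MemM n m) (h0 : MemM n c₀) (h1 : MemM n c₁)
    {t : ℝ} (ht : t ∈ Icc (0 : ℝ) 1) :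
    min (softDice n m c₀) (softDice n m c₁) ≤
      softDice n m (fun ω => (1 - t) * c₀ ω + t * c₁ ω) := by
  rcases hm.vol1_nonneg.eq_or_lt with hM | hM
  · simp only [softDice_eq_one_of_vol1_eq_zero hm hM.symm, min_self, le_refl]
  rw [softDice_segment hm h0 h1, softDice, softDice, min_sub_sub_left]
  exact sub_le_sub_left (convex_combination_div_le_max_div (by linarith [h0.vol1_nonneg])
    (by linarith [h1.vol1_nonneg]) ht) 1

lemma exists_memS_forall_softDice_le (hm : MemM n m) :
    ∃ s, MemS n s ∧ ∀ c, MemM n c → softDice n m s ≤ softDice n m c := by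
  rcases hm.vol1_nonneg.eq_or_lt with hM | hM
  · refine ⟨0, ⟨measurable_const, fun _ => Or.inl rfl⟩, fun c _ => ?_⟩
    rw [softDice_eq_one_of_vol1_eq_zero hm hM.symm, softDice_eq_one_of_vol1_eq_zero hm hM.symm]
  have hD : ∀ c, MemM n c → 0 < vol1 n c + vol1 n m := fun c hc => by
    linarith [hc.vol1_nonneg]
  obtain ⟨r, hr⟩ := exists_integral_max_two_mul_sub_zero_eq (μ := lam n) hm.1 hm.2
  set s : (Fin n → ℝ) → ℝ := fun ω => if 0 < 2 * m ω - r then 1 else 0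
  have hs : MemS n s := ⟨measurable_ite_pos_one_zero ((hm.1.const_mul 2).sub_const r),
    fun ω => by dsimp only [s]; split_ifs <;> simp⟩
  have hsr : softDice n m s = 1 - r := by
    have hs_eq := two_mul_integral_ite_mul_sub_eq (μ := lam n) hm.1 hm.2 r
    rw [hr] at hs_eq
    rw [softDice_eq_one_sub_iff (hD s hs.memM)]
    unfold vol1
    linarith
  refine ⟨s, hs, fun c hc => hsr ▸ (one_sub_le_softDice_iff (hD c hc)).2 ?_⟩
  have hc_le := two_mul_integral_mul_sub_le (μ := lam n) hc.1 hc.2 hm.1 hm.2 r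
  rw [hr] at hc_le
  unfold vol1
  linarith

end SoftDice

theorem soft_dice_mobius_along_segments_and_binary_minimizer
    (n : ℕ) (m c₀ c₁ : (Fin n → ℝ) → ℝ)
    (hm : MemM n m) (h0 : MemM n c₀) (h1 : MemM n c₁) :
    (∃ α β γ δ : ℝ, ∀ t ∈ Set.Icc (0:ℝ) 1,
        softDice n m (fun ω => (1 - t) * c₀ ω + t * c₁ ω) =
          1 - (α + β * t) / (γ + δ * t)) ∧
    (∀ t ∈ Set.Icc (0:ℝ) 1,
        min (softDice n m c₀) (softDice n m c₁) ≤
          softDice n m (fun ω => (1 - t) * c₀ ω + t * c₁ ω)) ∧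
    (∃ c : (Fin n → ℝ) → ℝ, MemS n c ∧
        softDice n m c = sInf (SDvals n m)) := by
  refine ⟨?_, fun t ht => min_softDice_le_softDice_segment hm h0 h1 ht, ?_⟩
  · obtain ⟨α, β, γ, δ, h⟩ := exists_softDice_segment_eq_mobius hm h0 h1
    exact ⟨α, β, γ, δ, fun t _ => h t⟩
  · obtain ⟨s, hs, hmin⟩ := exists_memS_forall_softDice_le hm
    refine ⟨s, hs, (IsLeast.csInf_eq (s := SDvals n m) ⟨⟨s, hs.memM, rfl⟩, ?_⟩).symm⟩
    rintro _ ⟨c, hc, rfl⟩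
    exact hmin c hc
end
end
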